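/- arXiv:2512.05526 — 3 statements merged into one kernel-verified Lean document; each statement's English description precedes it below -/
import Mathlib

section
/- Let ℓ be a strictly positive pmf on a finite set Y, d ≥ 0, and let g(y) = h(y)/∑_{y'∈Y} h(y') for some function h with ℓ(y) ≤ h(y) ≤ (1+d)ℓ(y) for all y. Then for every A ⊆ Y, (1 + (1+d)·ℓ(Aᶜ)/ℓ(A))^{-1} ≤ g(A) ≤ (1 + ℓ(Aᶜ)/((1+d)·ℓ(A)))^{-1}, where ℓ(A) = ∑_{y∈A} ℓ(y) and g(A) = ∑_{y∈A} g(y), assuming A and Aᶜ are nonempty. -/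
/-- Every element of the interval of measures `𝓘(ℓ,(1+d)ℓ)` (normalizations of
functions sandwiched between `ℓ` and `(1+d)ℓ`) has event probabilities sandwiched
between Walley's lower and upper bounds. -/
theorem stmt_12 {Y : Type*} [Fintype Y] [DecidableEq Y] (ℓ : Y → ℝ)
    (hpos : ∀ y, 0 < ℓ y) (hsum : ∑ y, ℓ y = 1) (d : ℝ) (hd : 0 ≤ d)
    (h : Y → ℝ) (hh : ∀ y, ℓ y ≤ h y ∧ h y ≤ (1 + d) * ℓ y)
    (g : Y → ℝ) (hg : ∀ y, g y = h y / ∑ y', h y')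
    (A : Finset Y) (hA : A.Nonempty) (hAc : Aᶜ.Nonempty) :
    (1 + (1 + d) * (∑ y ∈ Aᶜ, ℓ y) / (∑ y ∈ A, ℓ y))⁻¹ ≤ ∑ y ∈ A, g y ∧
    ∑ y ∈ A, g y ≤ (1 + (∑ y ∈ Aᶜ, ℓ y) / ((1 + d) * ∑ y ∈ A, ℓ y))⁻¹ := by
  set a := ∑ y ∈ A, ℓ y with ha
  set b := ∑ y ∈ Aᶜ, ℓ y with hb
  set x := ∑ y ∈ A, h y with hx
  set z := ∑ y ∈ Aᶜ, h y with hz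
  have hapos : 0 < a := Finset.sum_pos (fun y _ => hpos y) hA
  have hbpos : 0 < b := Finset.sum_pos (fun y _ => hpos y) hAc
  have hxa : a ≤ x := Finset.sum_le_sum (fun y _ => (hh y).1)
  have hxu : x ≤ (1 + d) * a := by
    rw [ha, Finset.mul_sum]; exact Finset.sum_le_sum (fun y _ => (hh y).2)
  have hzb : b ≤ z := Finset.sum_le_sum (fun y _ => (hh y).1)
  have hzu : z ≤ (1 + d) * b := by
    rw [hb, Finset.mul_sum]; exact Finset.sum_le_sum (fun y _ => (hh y).2)
  have hxpos : 0 < x := lt_of_lt_of_le hapos hxa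
  have hzpos : 0 < z := lt_of_lt_of_le hbpos hzb
  have hd1 : (0:ℝ) < 1 + d := by linarith
  have hS : ∑ y', h y' = x + z := (Finset.sum_add_sum_compl A h).symm
  have hgs : ∑ y ∈ A, g y = x / (x + z) := by
    simp only [hg]; rw [← Finset.sum_div, hS]
  rw [hgs]
  constructor
  · have e1 : 1 + (1 + d) * b / a = (a + (1 + d) * b) / a := by field_simp
    rw [e1, inv_div, div_le_div_iff₀ (by positivity) (by positivity)]
    nlinarith
  · have e2 : 1 + b / ((1 + d) * a) = ((1 + d) * a + b) / ((1 + d) * a) := by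
      field_simp
    rw [e2, inv_div, div_le_div_iff₀ (by positivity) (by positivity)]
    nlinarith
end

section
/- For γ ∈ (0,1) and d ≥ 0, the quantity γ(1−γ)d(2+d) / ((1−γ)(1+d)² + γ) lies in [0, γ), is equal to 0 exactly when d = 0, and tends to γ as d → ∞. -/
/-- Degree of conservativeness of the IHDR: the quantity
`γ(1−γ)d(2+d) / ((1−γ)(1+d)² + γ)` lies in `[0,γ)`, vanishes exactly at `d = 0`,
and tends to `γ` as `d → ∞`. -/
theorem stmt_14 (γ : ℝ) (hγ : γ ∈ Set.Ioo (0:ℝ) 1) :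
    (∀ d : ℝ, 0 ≤ d →
      0 ≤ γ * (1 - γ) * d * (2 + d) / ((1 - γ) * (1 + d) ^ 2 + γ) ∧
      γ * (1 - γ) * d * (2 + d) / ((1 - γ) * (1 + d) ^ 2 + γ) < γ) ∧
    (∀ d : ℝ, 0 ≤ d →
      (γ * (1 - γ) * d * (2 + d) / ((1 - γ) * (1 + d) ^ 2 + γ) = 0 ↔ d = 0)) ∧
    Filter.Tendsto (fun d : ℝ => γ * (1 - γ) * d * (2 + d) / ((1 - γ) * (1 + d) ^ 2 + γ))
      Filter.atTop (nhds γ) := by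
  obtain ⟨hγ0, hγ1⟩ := hγ
  have h1 : (0:ℝ) < 1 - γ := by linarith
  have hD : ∀ d : ℝ, 0 < (1 - γ) * (1 + d) ^ 2 + γ := by
    intro d
    nlinarith [sq_nonneg (1 + d), mul_nonneg h1.le (sq_nonneg (1 + d))]
  refine ⟨?_, ?_, ?_⟩
  · intro d hd
    constructor
    · apply div_nonneg _ (hD d).le
      have : 0 ≤ (2:ℝ) + d := by linarith
      positivity
    · rw [div_lt_iff₀ (hD d)]
      nlinarith
  · intro d hd
    rw [div_eq_zero_iff]
    constructor
    · rintro (h | h)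
      · have : d ≤ 0 := by
          by_contra hc
          push_neg at hc
          nlinarith [mul_pos (mul_pos (mul_pos hγ0 h1) hc) (by linarith : (0:ℝ) < 2 + d)]
        linarith
      · exact absurd h (hD d).ne'
    · intro h; left; rw [h]; ring
  · have key : (fun d : ℝ => γ * (1 - γ) * d * (2 + d) / ((1 - γ) * (1 + d) ^ 2 + γ))
        = fun d : ℝ => γ - γ / ((1 - γ) * (1 + d) ^ 2 + γ) := by
      funext d
      have := (hD d).ne'
      field_simp
      ring
    rw [key]
    have hDtop : Filter.Tendsto (fun d : ℝ => (1 - γ) * (1 + d) ^ 2 + γ)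
        Filter.atTop Filter.atTop := by
      apply Filter.tendsto_atTop_add_const_right
      apply Filter.Tendsto.const_mul_atTop h1
      exact (Filter.tendsto_pow_atTop (two_ne_zero)).comp
        (Filter.tendsto_atTop_add_const_left _ 1 Filter.tendsto_id)
    have h0 : Filter.Tendsto (fun d : ℝ => γ / ((1 - γ) * (1 + d) ^ 2 + γ))
        Filter.atTop (nhds 0) := Filter.Tendsto.div_atTop tendsto_const_nhds hDtop
    simpa using tendsto_const_nhds.sub h0
end

section
/- Let 𝒫 be the credal set Conv({P₁,...,P_S}) of pmfs on a finite set Y. Define TU(𝒫) = sup_{P∈𝒫} H(P), AU(𝒫) = inf_{P∈𝒫} H(P), and EU(𝒫) = TU(𝒫) − AU(𝒫). Then EU(𝒫) ≤ max_s H(P_s) + log₂(S) − min_s H(P_s), and EU(𝒫) ≥ max{0, max_s H(P_s) − min_s H(P_s)}. -/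
/-- Shannon entropy (base 2) of a pmf on a finite set. -/
noncomputable def entropy {Y : Type*} [Fintype Y] (p : Y → ℝ) : ℝ :=
  -∑ y, p y * Real.logb 2 (p y)

/-- The finitely generated credal set `Conv({P₁,...,P_S})`: all convex combinations. -/
def credal {Y : Type*} [Fintype Y] {S : ℕ} (P : Fin S → Y → ℝ) : Set (Y → ℝ) :=
  {p | ∃ β : Fin S → ℝ, (∀ s, 0 ≤ β s) ∧ ∑ s, β s = 1 ∧ p = fun y => ∑ s, β s * P s y}

/-! Concavity of `H` bounds the entropy of a mixture `∑ β_s P_s` below by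
`∑ β_s H(P_s) ≥ min_s H(P_s)`. Subadditivity of `x ↦ -x log x` bounds it above by
`H(β) + ∑ β_s H(P_s) ≤ log₂ S + max_s H(P_s)`.
The vertices `P_s` themselves lie in the credal set, so `sup H ≥ max_s H(P_s)` and
`inf H ≤ min_s H(P_s)`. -/

open Finset Real

lemma entropy_eq_sum_negMulLog_div {Y : Type*} [Fintype Y] (p : Y → ℝ) :
    entropy p = (∑ y, negMulLog (p y)) / log 2 := by
  simp only [entropy, logb, negMulLog, sum_div, ← sum_neg_distrib]
  congr 1; ext y; ring

lemma negMulLog_sum_le_sum_negMulLog {ι : Type*} (t : Finset ι) (f : ι → ℝ)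
    (hf : ∀ i ∈ t, 0 ≤ f i) :
    negMulLog (∑ i ∈ t, f i) ≤ ∑ i ∈ t, negMulLog (f i) := by
  rw [negMulLog, neg_mul, sum_mul, ← sum_neg_distrib]
  refine sum_le_sum fun i hi => ?_
  rcases (hf i hi).eq_or_lt with h0 | h0
  · simp [← h0]
  · have := log_le_log h0 (single_le_sum hf hi)
    rw [negMulLog]
    nlinarith

lemma sum_negMulLog_le_log_card {ι : Type*} [Fintype ι] (β : ι → ℝ)
    (hβ0 : ∀ i, 0 ≤ β i) (hβ1 : ∑ i, β i = 1) :
    ∑ i, negMulLog (β i) ≤ log (Fintype.card ι) := by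
  have hn : (0 : ℝ) < Fintype.card ι := by
    have : Nonempty ι := by
      by_contra h
      simp [not_nonempty_iff.mp h] at hβ1
    exact_mod_cast Fintype.card_pos
  have jensen := concaveOn_negMulLog.le_map_sum (t := univ)
    (w := fun _ => (Fintype.card ι : ℝ)⁻¹) (p := β) (fun _ _ => by positivity)
    (by simp [card_univ, hn.ne']) (fun i _ => hβ0 i)
  simp only [smul_eq_mul, ← mul_sum, hβ1, mul_one] at jensen
  rw [negMulLog, log_inv, neg_mul_neg] at jensen
  exact le_of_mul_le_mul_left jensen (inv_pos.2 hn)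

lemma entropy_le_logb_card {ι : Type*} [Fintype ι] (β : ι → ℝ)
    (hβ0 : ∀ i, 0 ≤ β i) (hβ1 : ∑ i, β i = 1) :
    entropy β ≤ logb 2 (Fintype.card ι) := by
  rw [entropy_eq_sum_negMulLog_div, logb]
  exact div_le_div_of_nonneg_right (sum_negMulLog_le_log_card β hβ0 hβ1) (log_nonneg one_le_two)

section Mixture

variable {Y ι : Type*} [Fintype Y] [Fintype ι] (P : ι → Y → ℝ) (β : ι → ℝ)

lemma sum_mul_entropy_le_entropy_mixture (hP0 : ∀ i y, 0 ≤ P i y)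
    (hβ0 : ∀ i, 0 ≤ β i) (hβ1 : ∑ i, β i = 1) :
    ∑ i, β i * entropy (P i) ≤ entropy (fun y => ∑ i, β i * P i y) := by
  simp only [entropy_eq_sum_negMulLog_div, ← mul_div_assoc, ← sum_div, mul_sum]
  refine div_le_div_of_nonneg_right ?_ (log_nonneg one_le_two)
  rw [sum_comm]
  refine sum_le_sum fun y _ => ?_
  simpa only [smul_eq_mul] using concaveOn_negMulLog.le_map_sum (t := univ) (w := β)
    (p := fun i => P i y) (fun i _ => hβ0 i) hβ1 (fun i _ => hP0 i y)

lemma entropy_mixture_le (hP0 : ∀ i y, 0 ≤ P i y) (hP1 : ∀ i, ∑ y, P i y = 1)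
    (hβ0 : ∀ i, 0 ≤ β i) :
    entropy (fun y => ∑ i, β i * P i y) ≤ entropy β + ∑ i, β i * entropy (P i) := by
  simp only [entropy_eq_sum_negMulLog_div, ← mul_div_assoc, ← sum_div, ← add_div]
  refine div_le_div_of_nonneg_right ?_ (log_nonneg one_le_two)
  calc ∑ y, negMulLog (∑ i, β i * P i y)
      ≤ ∑ y, ∑ i, negMulLog (β i * P i y) :=
        sum_le_sum fun y _ => negMulLog_sum_le_sum_negMulLog _ _
          fun i _ => mul_nonneg (hβ0 i) (hP0 i y)
    _ = ∑ i, ((∑ y, P i y) * negMulLog (β i) + β i * ∑ y, negMulLog (P i y)) := by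
        simp only [negMulLog_mul, sum_comm (γ := Y), sum_add_distrib, sum_mul, mul_sum]
    _ = ∑ i, negMulLog (β i) + ∑ i, β i * ∑ y, negMulLog (P i y) := by
        simp only [hP1, one_mul, sum_add_distrib]

end Mixture

section WeightedAverage

variable {ι : Type*} [Fintype ι] (h : (univ : Finset ι).Nonempty) (f : ι → ℝ)
  {β : ι → ℝ}

lemma inf'_le_sum_mul (hβ0 : ∀ i, 0 ≤ β i) (hβ1 : ∑ i, β i = 1) :
    univ.inf' h f ≤ ∑ i, β i * f i :=
  calc univ.inf' h f = ∑ i, β i * univ.inf' h f := by rw [← sum_mul, hβ1, one_mul]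
    _ ≤ ∑ i, β i * f i :=
        sum_le_sum fun i _ => mul_le_mul_of_nonneg_left (inf'_le f (mem_univ i)) (hβ0 i)

lemma sum_mul_le_sup' (hβ0 : ∀ i, 0 ≤ β i) (hβ1 : ∑ i, β i = 1) :
    ∑ i, β i * f i ≤ univ.sup' h f :=
  calc ∑ i, β i * f i ≤ ∑ i, β i * univ.sup' h f :=
        sum_le_sum fun i _ => mul_le_mul_of_nonneg_left (le_sup' f (mem_univ i)) (hβ0 i)
    _ = univ.sup' h f := by rw [← sum_mul, hβ1, one_mul]

end WeightedAverage

section Credal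

variable {Y : Type*} [Fintype Y] {S : ℕ} (P : Fin S → Y → ℝ)

lemma mem_credal_self (s : Fin S) : P s ∈ credal P :=
  ⟨Pi.single s 1, fun t => by rw [Pi.single_apply]; positivity, by simp, by
    funext y; simp [Pi.single_apply, ite_mul]⟩

lemma inf'_entropy_le_entropy_of_mem_credal (hS : (univ : Finset (Fin S)).Nonempty)
    (hP0 : ∀ s y, 0 ≤ P s y) {p : Y → ℝ} (hp : p ∈ credal P) :
    univ.inf' hS (fun s => entropy (P s)) ≤ entropy p := by
  obtain ⟨β, hβ0, hβ1, rfl⟩ := hp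
  exact (inf'_le_sum_mul hS _ hβ0 hβ1).trans
    (sum_mul_entropy_le_entropy_mixture P β hP0 hβ0 hβ1)

lemma entropy_le_sup'_entropy_add_logb_of_mem_credal
    (hS : (univ : Finset (Fin S)).Nonempty) (hP0 : ∀ s y, 0 ≤ P s y)
    (hP1 : ∀ s, ∑ y, P s y = 1) {p : Y → ℝ} (hp : p ∈ credal P) :
    entropy p ≤ univ.sup' hS (fun s => entropy (P s)) + logb 2 S := by
  obtain ⟨β, hβ0, hβ1, rfl⟩ := hp
  have hβ : entropy β ≤ logb 2 S := by
    simpa only [Fintype.card_fin] using entropy_le_logb_card β hβ0 hβ1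
  linarith [entropy_mixture_le P β hP0 hP1 hβ0,
    sum_mul_le_sup' hS (fun s => entropy (P s)) hβ0 hβ1]

end Credal

/-- Bounds on the epistemic uncertainty `EU(𝒫) = TU(𝒫) − AU(𝒫)` of a finitely
generated credal set. -/
theorem stmt_19 {Y : Type*} [Fintype Y] (S : ℕ) (hS : 0 < S) (P : Fin S → Y → ℝ)
    (hP0 : ∀ s y, 0 ≤ P s y) (hP1 : ∀ s, ∑ y, P s y = 1) :
    sSup {h : ℝ | ∃ p ∈ credal P, h = entropy p}
        - sInf {h : ℝ | ∃ p ∈ credal P, h = entropy p}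
      ≤ Finset.univ.sup' (Finset.univ_nonempty_iff.mpr (Fin.pos_iff_nonempty.mp hS))
            (fun s => entropy (P s)) + Real.logb 2 S
        - Finset.univ.inf' (Finset.univ_nonempty_iff.mpr (Fin.pos_iff_nonempty.mp hS))
            (fun s => entropy (P s)) ∧
    max 0 (Finset.univ.sup' (Finset.univ_nonempty_iff.mpr (Fin.pos_iff_nonempty.mp hS))
            (fun s => entropy (P s))
        - Finset.univ.inf' (Finset.univ_nonempty_iff.mpr (Fin.pos_iff_nonempty.mp hS))
            (fun s => entropy (P s)))
      ≤ sSup {h : ℝ | ∃ p ∈ credal P, h = entropy p}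
        - sInf {h : ℝ | ∃ p ∈ credal P, h = entropy p} := by
  have hne : (univ : Finset (Fin S)).Nonempty :=
    univ_nonempty_iff.mpr (Fin.pos_iff_nonempty.mp hS)
  set E := {h : ℝ | ∃ p ∈ credal P, h = entropy p}
  have hvertex : ∀ s, entropy (P s) ∈ E := fun s => ⟨P s, mem_credal_self P s, rfl⟩
  have hlower : ∀ h ∈ E, univ.inf' hne (fun s => entropy (P s)) ≤ h := by
    rintro _ ⟨p, hp, rfl⟩
    exact inf'_entropy_le_entropy_of_mem_credal P hne hP0 hp
  have hupper : ∀ h ∈ E, h ≤ univ.sup' hne (fun s => entropy (P s)) + logb 2 S := by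
    rintro _ ⟨p, hp, rfl⟩
    exact entropy_le_sup'_entropy_add_logb_of_mem_credal P hne hP0 hP1 hp
  have hE : E.Nonempty := ⟨_, hvertex ⟨0, hS⟩⟩
  have hbddA : BddAbove E := ⟨_, hupper⟩
  have hbddB : BddBelow E := ⟨_, hlower⟩
  refine ⟨sub_le_sub (csSup_le hE hupper) (le_csInf hE hlower),
    max_le (sub_nonneg.2 (csInf_le_csSup hE hbddB hbddA)) (sub_le_sub ?_ ?_)⟩
  · exact sup'_le hne _ fun s _ => le_csSup hbddA (hvertex s)
  · exact le_inf' hne _ fun s _ => csInf_le hbddB (hvertex s)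
end
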